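/- Let A₁ and A₂ be disjoint subsets of {1,…,n}, and let P be a partition of A₂ into pairs (a perfect matching of A₂ of size m = |A₂|/2). Let W be the set of vertices of G(n,3,1) of the form {x} ∪ e with x ∈ A₁ and e ∈ P. Then |W| = |A₁|·m, the subgraph of G(n,3,1) induced on W is regular of degree m − 1, and the number of edges of G(n,3,1) with both endpoints in W equals |A₁|·m·(m−1)/2. -/

import Mathlib

/-- The vertices of `G(n,3,1)`: 3-element subsets of `{1, …, n}`. -/
abbrev Vtx (n : ℕ) := {s : Finset ℕ // s ⊆ Finset.Icc 1 n ∧ s.card = 3}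

/-- The graph `G(n,3,1)`: two 3-element subsets of `{1, …, n}` are adjacent
iff they intersect in exactly one element. -/
def G (n : ℕ) : SimpleGraph (Vtx n) where
  Adj a b := (a.1 ∩ b.1).card = 1
  symm := ⟨by intro a b h; change (a.1 ∩ b.1).card = 1 at h; show (b.1 ∩ a.1).card = 1; rwa [Finset.inter_comm]⟩
  loopless := ⟨by intro a h; change (a.1 ∩ a.1).card = 1 at h; rw [Finset.inter_self, a.2.2] at h; omega⟩

instance (n : ℕ) : DecidableRel (G n).Adj := fun a b =>
  inferInstanceAs (Decidable ((a.1 ∩ b.1).card = 1))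

instance (n : ℕ) : Fintype (Vtx n) :=
  Fintype.subtype ((Finset.Icc 1 n).powerset.filter fun s => s.card = 3) (by
    intro s
    simp [Finset.mem_powerset, and_comm])

instance (n : ℕ) (s : Set (Vtx n)) : DecidableRel ((G n).induce s).Adj := fun a b =>
  inferInstanceAs (Decidable (((a : Vtx n).1 ∩ (b : Vtx n).1).card = 1))

/-- The number of edges of `G(n,3,1)` with both endpoints in `W`. -/
def edgesIn (n : ℕ) (W : Finset (Vtx n)) : ℕ :=
  ((G n).induce (W : Set (Vtx n))).edgeFinset.card

/-- The independence number of `G(n,3,1)`. -/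
noncomputable def alpha (n : ℕ) : ℕ :=
  sSup {k | ∃ W : Finset (Vtx n), W.card = k ∧ ∀ u ∈ W, ∀ v ∈ W, ¬ (G n).Adj u v}

/-- The minimal number of edges induced on a vertex subset of cardinality `l`. -/
noncomputable def rmin (n l : ℕ) : ℕ :=
  sInf {m | ∃ W : Finset (Vtx n), W.card = l ∧ edgesIn n W = m}

/-!
Every apex `x ∈ A₁` lies outside the pairs of `P`, and distinct pairs are disjoint, so
`|({x} ∪ e) ∩ ({y} ∪ f)| = [x = y] + 2 [e = f]`. Hence two triples of `W` meet in exactly one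
point iff they share the apex and have different pairs, i.e. `(x, e) ↦ {x} ∪ e` is an
isomorphism from `⊥ □ ⊤` on `A₁ × P` (`|A₁|` disjoint copies of `K_m`) onto the subgraph induced
on `W`. That subgraph is therefore `(m - 1)`-regular on `|A₁| m` vertices, and the handshake
lemma counts its edges.
-/

open Finset SimpleGraph

namespace Finset

variable {α : Type*} [DecidableEq α] {x y : α} {e f : Finset α}

theorem insert_eq_insert_iff_of_notMem (hxe : x ∉ e) (hxf : x ∉ f) :
    insert x e = insert y f ↔ x = y ∧ e = f := by
  refine ⟨fun h ↦ ?_, by rintro ⟨rfl, rfl⟩; rfl⟩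
  obtain rfl : x = y := (mem_insert.mp (h ▸ mem_insert_self x e)).resolve_right hxf
  exact ⟨rfl, by rw [← erase_insert hxe, h, erase_insert hxf]⟩

theorem card_insert_inter_insert (hxe : x ∉ e) (hxf : x ∉ f) (hye : y ∉ e) :
    #(insert x e ∩ insert y f) = #({x} ∩ {y} : Finset α) + #(e ∩ f) := by
  have hsplit : insert x e ∩ insert y f = ({x} ∩ {y}) ∪ (e ∩ f) := by
    ext z
    simp only [mem_inter, mem_insert, mem_union, mem_singleton]
    constructor
    · rintro ⟨rfl | hz, rfl | hz'⟩
      exacts [Or.inl ⟨rfl, rfl⟩, absurd hz' hxf, absurd hz hye, Or.inr ⟨hz, hz'⟩]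
    · rintro (⟨rfl, rfl⟩ | ⟨hz, hz'⟩)
      exacts [⟨Or.inl rfl, Or.inl rfl⟩, ⟨Or.inr hz, Or.inr hz'⟩]
  rw [hsplit, card_union_of_disjoint (disjoint_left.mpr fun z hz hz' ↦ ?_)]
  rw [mem_singleton.mp (mem_inter.mp hz).1] at hz'
  exact hxe (mem_inter.mp hz').1

theorem card_insert_inter_insert_eq_one_iff (hxe : x ∉ e) (hxf : x ∉ f) (hye : y ∉ e)
    (he : #e = 2) (hef : e = f ∨ Disjoint e f) :
    #(insert x e ∩ insert y f) = 1 ↔ x = y ∧ e ≠ f := by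
  rw [card_insert_inter_insert hxe hxf hye]
  rcases hef with rfl | hef
  · by_cases hxy : x = y <;> simp [hxy, he]
  · have hne : e ≠ f := by
      rintro rfl
      rw [disjoint_self, bot_eq_empty] at hef
      simp [hef] at he
    by_cases hxy : x = y <;> simp [hxy, hne, disjoint_iff_inter_eq_empty.mp hef]

end Finset

theorem SimpleGraph.IsRegularOfDegree.two_mul_card_edgeFinset {V : Type*} [Fintype V]
    {G : SimpleGraph V} [DecidableRel G.Adj] {d : ℕ} (h : G.IsRegularOfDegree d) :
    2 * #G.edgeFinset = Fintype.card V * d := by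
  rw [← G.sum_degrees_eq_twice_card_edges]
  simp [h.degree_eq]

section PairedTriples

variable {n : ℕ} {A₁ : Finset ℕ} {P : Finset (Finset ℕ)} {W : Finset (Vtx n)}

noncomputable def boxProdIsoInduce (hA₁ : A₁ ⊆ Icc 1 n) (hP : ∀ e ∈ P, e ⊆ Icc 1 n)
    (hPpair : ∀ e ∈ P, #e = 2) (hPdisj : (P : Set (Finset ℕ)).Pairwise Disjoint)
    (hapex : ∀ x ∈ A₁, ∀ e ∈ P, x ∉ e)
    (hW : ∀ v : Vtx n, v ∈ W ↔ ∃ x ∈ A₁, ∃ e ∈ P, v.1 = insert x e) :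
    (⊥ : SimpleGraph A₁).boxProd (⊤ : SimpleGraph P) ≃g (G n).induce (W : Set (Vtx n)) where
  toEquiv := Equiv.ofBijective
    (fun p ↦ ⟨⟨insert p.1.1 p.2.1, insert_subset (hA₁ p.1.2) (hP _ p.2.2), by
        rw [card_insert_of_notMem (hapex _ p.1.2 _ p.2.2), hPpair _ p.2.2]⟩,
      (hW _).2 ⟨_, p.1.2, _, p.2.2, rfl⟩⟩)
    ⟨fun p q hpq ↦ by
      have h := (insert_eq_insert_iff_of_notMem (hapex _ p.1.2 _ p.2.2)
        (hapex _ p.1.2 _ q.2.2)).mp (congrArg (fun v : (W : Set (Vtx n)) ↦ v.1.1) hpq)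
      exact Prod.ext (Subtype.ext h.1) (Subtype.ext h.2),
    fun v ↦ by
      obtain ⟨x, hx, e, he, hv⟩ := (hW v).1 v.2
      exact ⟨(⟨x, hx⟩, ⟨e, he⟩), Subtype.ext (Subtype.ext hv.symm)⟩⟩
  map_rel_iff' {p q} := by
    change #(insert p.1.1 p.2.1 ∩ insert q.1.1 q.2.1) = 1 ↔ _
    rw [card_insert_inter_insert_eq_one_iff (hapex _ p.1.2 _ p.2.2) (hapex _ p.1.2 _ q.2.2)
      (hapex _ q.1.2 _ p.2.2) (hPpair _ p.2.2)
      ((eq_or_ne p.2.1 q.2.1).imp_right (hPdisj p.2.2 q.2.2))]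
    simp only [boxProd_adj, bot_adj, top_adj, false_and, false_or, ne_eq, Subtype.ext_iff]
    exact and_comm

end PairedTriples

theorem stmt_9_general (n m : ℕ) (A₁ A₂ : Finset ℕ)
    (hA₁ : A₁ ⊆ Finset.Icc 1 n) (hA₂ : A₂ ⊆ Finset.Icc 1 n) (hdisj : Disjoint A₁ A₂)
    (P : Finset (Finset ℕ))
    (hPpair : ∀ e ∈ P, e.card = 2)
    (hPdisj : (P : Set (Finset ℕ)).Pairwise Disjoint)
    (hPunion : P.biUnion id = A₂)
    (hm : P.card = m)
    (W : Finset (Vtx n))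
    (hW : ∀ v : Vtx n, v ∈ W ↔ ∃ x ∈ A₁, ∃ e ∈ P, v.1 = insert x e) :
    W.card = A₁.card * m ∧
    (∀ v : (W : Set (Vtx n)), ((G n).induce (W : Set (Vtx n))).degree v = m - 1) ∧
    edgesIn n W = A₁.card * m * (m - 1) / 2 := by
  have hsub : ∀ e ∈ P, e ⊆ A₂ := fun e he ↦ hPunion ▸ subset_biUnion_of_mem id he
  let φ := boxProdIsoInduce hA₁ (fun e he ↦ (hsub e he).trans hA₂) hPpair hPdisj
    (fun x hx e he hxe ↦ disjoint_left.mp hdisj hx (hsub e he hxe)) hW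
  have hcard : W.card = A₁.card * m := by
    simpa [hm] using (Fintype.card_congr φ.toEquiv).symm
  have hreg : ((G n).induce (W : Set (Vtx n))).IsRegularOfDegree (m - 1) := fun v ↦ by
    rw [← φ.apply_symm_apply v, φ.degree_eq, degree_boxProd, bot_degree, complete_graph_degree,
      Fintype.card_coe, hm, zero_add]
  refine ⟨hcard, hreg.degree_eq, ?_⟩
  have h2 := hreg.two_mul_card_edgeFinset
  simp only [coe_sort_coe, Fintype.card_coe, hcard] at h2
  unfold edgesIn
  omega

/-- Let `A₁, A₂ ⊆ {1, …, n}` be disjoint and let `P` be a partition of `A₂` into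
`m` pairs. Let `W` be the set of vertices of `G(n,3,1)` of the form `{x} ∪ e` with
`x ∈ A₁` and `e ∈ P`. Then `|W| = |A₁|·m`, the subgraph induced on `W` is regular of
degree `m − 1`, and `W` spans exactly `|A₁|·m·(m−1)/2` edges of `G(n,3,1)`. -/
theorem stmt_9 (n m : ℕ) (A₁ A₂ : Finset ℕ)
    (hA₁ : A₁ ⊆ Finset.Icc 1 n) (hA₂ : A₂ ⊆ Finset.Icc 1 n) (hdisj : Disjoint A₁ A₂)
    (P : Finset (Finset ℕ))
    (hPpair : ∀ e ∈ P, e.card = 2)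
    (hPdisj : (P : Set (Finset ℕ)).Pairwise Disjoint)
    (hPunion : P.biUnion id = A₂)
    (hm : P.card = m) (hm2 : 2 * m = A₂.card)
    (W : Finset (Vtx n))
    (hW : ∀ v : Vtx n, v ∈ W ↔ ∃ x ∈ A₁, ∃ e ∈ P, v.1 = insert x e) :
    W.card = A₁.card * m ∧
    (∀ v : (W : Set (Vtx n)), ((G n).induce (W : Set (Vtx n))).degree v = m - 1) ∧
    edgesIn n W = A₁.card * m * (m - 1) / 2 :=
  stmt_9_general n m A₁ A₂ hA₁ hA₂ hdisj P hPpair hPdisj hPunion hm W hW
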